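/- Suppose M ∈ ℕ and t_1, …, t_M ∈ [0,1] are such that for every nonzero x ∈ X^N there exists some 1 ≤ j ≤ M with x(t_j) ≠ 0. Then there exists a nonzero x ∈ X^N such that (nN/((1+ε)M))·‖x‖_{L_1[0,1]} ≤ (1/M)·∑_{j=1}^M |x(t_j)|. -/

import Mathlib

/-!
Each `x_k` with `k ≤ n` is supported on the block `[(k-1)/N, k/N)`, so the separation hypothesis
puts a sample point in each of the first `n` blocks, and that point lies in some subinterval
`I_k(i_k)`. The function `x_j` whose index tuple is `(i_1, …, i_n)` is then at least `N` at these
`n` distinct sample points, while its `L_1` norm is `n · N/(mN) + N/N = ε + 1`.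
-/

open MeasureTheory Set Finset

/-- The interval `I_k(i)` of width `1/(m*N)`, the `i`-th subinterval (1-based)
of `[(k-1)/N, k/N)`. -/
noncomputable def Ik (m N k i : ℕ) : Set ℝ :=
  Set.Ico (((k : ℝ) - 1) / N + ((i : ℝ) - 1) / (m * N))
    (((k : ℝ) - 1) / N + (i : ℝ) / (m * N))

/-- The functions `x_j` of the construction: for `1 ≤ j ≤ n`,
`x_j = N·𝟙_{[(j-1)/N, j/N)}`, and for `n < j ≤ N`,
`x_j = N·∑_{k=1}^n 𝟙_{I_k(i_{k,j})} + N·𝟙_{[(j-1)/N, j/N)}`, where the indices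
`i_{k,j}` are encoded (0-based) by the map `idx`. -/
noncomputable def xfun (n m N : ℕ) (idx : ℕ → Fin n → Fin m) (j : ℕ) : ℝ → ℝ :=
  fun t =>
    if j ≤ n then
      (N : ℝ) * Set.indicator (Set.Ico (((j : ℝ) - 1) / N) ((j : ℝ) / N)) (fun _ => (1 : ℝ)) t
    else
      (N : ℝ) * ∑ k : Fin n,
          Set.indicator (Ik m N ((k : ℕ) + 1) ((idx j k : ℕ) + 1)) (fun _ => (1 : ℝ)) t
        + (N : ℝ) * Set.indicator (Set.Ico (((j : ℝ) - 1) / N) ((j : ℝ) / N)) (fun _ => (1 : ℝ)) t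

theorem Finset.sum_comp_le_sum_of_injective {ι κ M : Type*} [Fintype ι] [Fintype κ]
    [AddCommMonoid M] [PartialOrder M] [IsOrderedAddMonoid M] {f : ι → κ}
    (hf : Function.Injective f) {g : κ → M} (hg : ∀ b, 0 ≤ g b) :
    ∑ a, g (f a) ≤ ∑ b, g b :=
  calc ∑ a, g (f a) = ∑ b ∈ univ.map ⟨f, hf⟩, g b := (sum_map univ ⟨f, hf⟩ g).symm
    _ ≤ ∑ b, g b := sum_le_sum_of_subset_of_nonneg (subset_univ _) fun b _ _ => hg b

theorem setIntegral_Ico_zero_one_indicator_Ico {a b : ℝ} (ha : 0 ≤ a) (hab : a ≤ b)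
    (hb : b ≤ 1) :
    ∫ s in Ico (0 : ℝ) 1, (Ico a b).indicator (fun _ => (1 : ℝ)) s = b - a := by
  rw [setIntegral_indicator measurableSet_Ico, setIntegral_const, smul_eq_mul, mul_one,
    inter_eq_self_of_subset_right (Ico_subset_Ico ha hb), measureReal_def, Real.volume_Ico,
    ENNReal.toReal_ofReal (sub_nonneg.2 hab)]

theorem eq_of_mem_Ico_div_natCast {N j j' : ℕ} (hN : 0 < N) {s : ℝ}
    (h : s ∈ Ico (((j : ℝ) - 1) / N) ((j : ℝ) / N))
    (h' : s ∈ Ico (((j' : ℝ) - 1) / N) ((j' : ℝ) / N)) : j = j' := by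
  have hN : (0 : ℝ) < N := Nat.cast_pos.2 hN
  have h₁ : (j : ℝ) - 1 < j' := (div_lt_div_iff_of_pos_right hN).1 (h.1.trans_lt h'.2)
  have h₂ : (j' : ℝ) - 1 < j := (div_lt_div_iff_of_pos_right hN).1 (h'.1.trans_lt h.2)
  have h₁' : j < j' + 1 := by exact_mod_cast (by linarith : (j : ℝ) < j' + 1)
  have h₂' : j' < j + 1 := by exact_mod_cast (by linarith : (j' : ℝ) < j + 1)
  omega

theorem exists_mem_Ik {m N k : ℕ} (hm : 0 < m) (hN : 0 < N) {s : ℝ}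
    (hs : s ∈ Ico (((k : ℝ) - 1) / N) ((k : ℝ) / N)) :
    ∃ i : Fin m, s ∈ Ik m N k ((i : ℕ) + 1) := by
  have hmN : (0 : ℝ) < m * N := by positivity
  set u := (s - ((k : ℝ) - 1) / N) * (m * N)
  have hu₀ : 0 ≤ u := mul_nonneg (by linarith [hs.1]) hmN.le
  have hum : u < m := by
    have : s - ((k : ℝ) - 1) / N < 1 / N := by
      have := hs.2; rw [show (k : ℝ) / N = ((k : ℝ) - 1) / N + 1 / N by ring] at this; linarith
    calc u < 1 / N * (m * N) := mul_lt_mul_of_pos_right this hmN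
      _ = m := by field_simp
  refine ⟨⟨⌊u⌋₊, (Nat.floor_lt hu₀).2 hum⟩, ?_⟩
  have h₁ : (⌊u⌋₊ : ℝ) / (m * N) ≤ s - ((k : ℝ) - 1) / N :=
    (div_le_iff₀ hmN).2 (Nat.floor_le hu₀)
  have h₂ : s - ((k : ℝ) - 1) / N < ((⌊u⌋₊ : ℝ) + 1) / (m * N) :=
    (lt_div_iff₀ hmN).2 (Nat.lt_floor_add_one u)
  simp only [Ik, Nat.cast_add, Nat.cast_one, add_sub_cancel_right, Set.mem_Ico]
  constructor <;> linarith

theorem measurableSet_Ik {m N k i : ℕ} : MeasurableSet (Ik m N k i) := measurableSet_Ico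

theorem setIntegral_indicator_Ik {m N k i : ℕ} (hk : 1 ≤ k) (hkN : k ≤ N) (hi : 1 ≤ i)
    (him : i ≤ m) :
    ∫ s in Ico (0 : ℝ) 1, (Ik m N k i).indicator (fun _ => (1 : ℝ)) s = 1 / (m * N) := by
  have hN : (0 : ℝ) < N := Nat.cast_pos.2 (hk.trans hkN)
  have hk' : (1 : ℝ) ≤ k := by exact_mod_cast hk
  have hkN' : (k : ℝ) ≤ N := by exact_mod_cast hkN
  have hi' : (1 : ℝ) ≤ i := by exact_mod_cast hi
  have him' : (i : ℝ) ≤ m := by exact_mod_cast him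
  have hm : (0 : ℝ) < m := by linarith
  rw [Ik, setIntegral_Ico_zero_one_indicator_Ico]
  · ring
  · have : (0 : ℝ) ≤ ((i : ℝ) - 1) / (m * N) := div_nonneg (by linarith) (by positivity)
    have : (0 : ℝ) ≤ ((k : ℝ) - 1) / N := div_nonneg (by linarith) hN.le
    linarith
  · gcongr; linarith
  · calc ((k : ℝ) - 1) / N + i / (m * N) ≤ ((k : ℝ) - 1) / N + m / (m * N) := by gcongr
      _ = k / N := by field_simp; ring
      _ ≤ 1 := (div_le_one hN).2 hkN'

theorem setIntegral_indicator_Ico_div_natCast {N j : ℕ} (hj : 1 ≤ j) (hjN : j ≤ N) :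
    ∫ s in Ico (0 : ℝ) 1,
      (Ico (((j : ℝ) - 1) / N) ((j : ℝ) / N)).indicator (fun _ => (1 : ℝ)) s = 1 / N := by
  have hN : (0 : ℝ) < N := Nat.cast_pos.2 (hj.trans hjN)
  have hj' : (1 : ℝ) ≤ j := by exact_mod_cast hj
  rw [setIntegral_Ico_zero_one_indicator_Ico (div_nonneg (by linarith) hN.le)
    (by gcongr; linarith) ((div_le_one hN).2 (by exact_mod_cast hjN))]
  ring

section xfun

variable {n m N : ℕ} {idx : ℕ → Fin n → Fin m} {j : ℕ}

theorem xfun_of_le (hj : j ≤ n) (s : ℝ) :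
    xfun n m N idx j s =
      N * (Ico (((j : ℝ) - 1) / N) ((j : ℝ) / N)).indicator (fun _ => (1 : ℝ)) s := by
  simp only [xfun, if_pos hj]

theorem xfun_of_lt (hj : n < j) (s : ℝ) :
    xfun n m N idx j s =
      N * ∑ k : Fin n, (Ik m N ((k : ℕ) + 1) ((idx j k : ℕ) + 1)).indicator (fun _ => 1) s
        + N * (Ico (((j : ℝ) - 1) / N) ((j : ℝ) / N)).indicator (fun _ => (1 : ℝ)) s := by
  simp only [xfun, if_neg hj.not_ge]

theorem xfun_nonneg (s : ℝ) : 0 ≤ xfun n m N idx j s := by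
  have hI (A : Set ℝ) : 0 ≤ A.indicator (fun _ => (1 : ℝ)) s :=
    indicator_nonneg (fun _ _ => zero_le_one) s
  have hN : (0 : ℝ) ≤ N := N.cast_nonneg
  unfold xfun
  split_ifs
  · exact mul_nonneg hN (hI _)
  · exact add_nonneg (mul_nonneg hN (sum_nonneg fun _ _ => hI _)) (mul_nonneg hN (hI _))

theorem le_xfun_of_mem_Ico {s : ℝ} (hs : s ∈ Ico (((j : ℝ) - 1) / N) ((j : ℝ) / N)) :
    (N : ℝ) ≤ xfun n m N idx j s := by
  unfold xfun
  split_ifs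
  · simp [indicator_of_mem hs]
  · have : 0 ≤ ∑ k : Fin n,
        (Ik m N ((k : ℕ) + 1) ((idx j k : ℕ) + 1)).indicator (fun _ => (1 : ℝ)) s :=
      sum_nonneg fun _ _ => indicator_nonneg (fun _ _ => zero_le_one) _
    rw [indicator_of_mem hs, mul_one]
    have : (0 : ℝ) ≤ N := N.cast_nonneg
    nlinarith

theorem xfun_ne_zero (hN : 0 < N) : xfun n m N idx j ≠ 0 := by
  have hN : (0 : ℝ) < N := Nat.cast_pos.2 hN
  have hmem : ((j : ℝ) - 1) / N ∈ Ico (((j : ℝ) - 1) / N) ((j : ℝ) / N) :=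
    ⟨le_rfl, by gcongr; linarith⟩
  intro h
  have := le_xfun_of_mem_Ico (idx := idx) (m := m) hmem
  rw [h, Pi.zero_apply] at this
  linarith

theorem xfun_eq_zero_of_notMem (hj : j ≤ n) {s : ℝ}
    (hs : s ∉ Ico (((j : ℝ) - 1) / N) ((j : ℝ) / N)) : xfun n m N idx j s = 0 := by
  rw [xfun_of_le hj, indicator_of_notMem hs, mul_zero]

theorem le_xfun_of_mem_Ik (hj : n < j) (k : Fin n) {s : ℝ}
    (hs : s ∈ Ik m N ((k : ℕ) + 1) ((idx j k : ℕ) + 1)) :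
    (N : ℝ) ≤ xfun n m N idx j s := by
  have hsum : (1 : ℝ) ≤ ∑ k : Fin n,
      (Ik m N ((k : ℕ) + 1) ((idx j k : ℕ) + 1)).indicator (fun _ => (1 : ℝ)) s := by
    calc (1 : ℝ) = (Ik m N ((k : ℕ) + 1) ((idx j k : ℕ) + 1)).indicator (fun _ => 1) s :=
          (indicator_of_mem hs (fun _ => (1 : ℝ))).symm
      _ ≤ _ := single_le_sum (f := fun k : Fin n =>
          (Ik m N ((k : ℕ) + 1) ((idx j k : ℕ) + 1)).indicator (fun _ => (1 : ℝ)) s)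
          (fun _ _ => indicator_nonneg (fun _ _ => zero_le_one) _) (mem_univ k)
  have : (0 : ℝ) ≤ (Ico (((j : ℝ) - 1) / N) ((j : ℝ) / N)).indicator (fun _ => 1) s :=
    indicator_nonneg (fun _ _ => zero_le_one) _
  have : (0 : ℝ) ≤ N := N.cast_nonneg
  rw [xfun_of_lt hj]
  nlinarith

theorem setIntegral_abs_xfun (hm : 0 < m) (hj : n < j) (hjN : j ≤ N) :
    ∫ s in Ico (0 : ℝ) 1, |xfun n m N idx j s| = n / m + 1 := by
  have hN : (0 : ℝ) < N := Nat.cast_pos.2 (hj.trans_le hjN).pos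
  have hintegrable {A : Set ℝ} (hA : MeasurableSet A) :
      IntegrableOn (A.indicator (fun _ => (1 : ℝ))) (Ico (0 : ℝ) 1) :=
    (integrableOn_const (by simp)).indicator hA
  have hIk (k : Fin n) :
      ∫ s in Ico (0 : ℝ) 1,
        (Ik m N ((k : ℕ) + 1) ((idx j k : ℕ) + 1)).indicator (fun _ => (1 : ℝ)) s
          = 1 / (m * N) := by
    have := k.isLt
    exact setIntegral_indicator_Ik (by omega) (by omega) (by omega) (idx j k).isLt
  simp_rw [abs_of_nonneg (xfun_nonneg _), xfun_of_lt hj]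
  rw [integral_add
      ((integrable_finsetSum _ fun _ _ => hintegrable measurableSet_Ik).const_mul _)
      ((hintegrable measurableSet_Ico).const_mul _), integral_const_mul, integral_const_mul,
    integral_finsetSum _ fun k _ => hintegrable measurableSet_Ik, sum_congr rfl fun k _ => hIk k,
    setIntegral_indicator_Ico_div_natCast (by omega) hjN, sum_const, card_univ, Fintype.card_fin,
    nsmul_eq_mul]
  field_simp

end xfun

theorem stmt3_general (n m N : ℕ) (ε : ℝ) (hn : 0 < n) (hε : 0 < ε)
    (hm : (m : ℝ) = n / ε) (hN : N = n + m ^ n)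
    (idx : ℕ → Fin n → Fin m) (hidx : Set.BijOn idx (Set.Ioc n N) Set.univ)
    (M : ℕ) (t : Fin M → ℝ)
    (hsep : ∀ x ∈ Submodule.span ℝ (xfun n m N idx '' Set.Icc 1 N),
      x ≠ 0 → ∃ j, x (t j) ≠ 0) :
    ∃ x ∈ Submodule.span ℝ (xfun n m N idx '' Set.Icc 1 N), x ≠ 0 ∧
      (n * N : ℝ) / ((1 + ε) * M) * ∫ s in Set.Ico (0 : ℝ) 1, |x s| ≤
        (1 / M : ℝ) * ∑ j, |x (t j)| := by
  have hnN : n ≤ N := hN ▸ Nat.le_add_right n _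
  have hN0 : 0 < N := hn.trans_le hnN
  have hm0 : 0 < m := by exact_mod_cast (hm ▸ div_pos (Nat.cast_pos.2 hn) hε : (0 : ℝ) < m)
  have hmem (j : ℕ) (hj : j ∈ Set.Icc 1 N) :
      xfun n m N idx j ∈ Submodule.span ℝ (xfun n m N idx '' Set.Icc 1 N) :=
    Submodule.subset_span ⟨j, hj, rfl⟩
  have hblock (k : Fin n) :
      ∃ u, t u ∈ Ico ((((k + 1 : ℕ) : ℝ) - 1) / N) (((k + 1 : ℕ) : ℝ) / N) := by
    obtain ⟨u, hu⟩ := hsep _ (hmem (k + 1) ⟨by omega, by omega⟩) (xfun_ne_zero hN0)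
    exact ⟨u, by_contra fun h => hu (xfun_eq_zero_of_notMem (by omega) h)⟩
  choose u hu using hblock
  choose i hi using fun k => exists_mem_Ik hm0 hN0 (hu k)
  obtain ⟨j, ⟨hnj, hjN⟩, rfl⟩ := hidx.surjOn (mem_univ i)
  have hu_inj : Function.Injective u := fun k k' h =>
    Fin.ext (Nat.succ_injective (eq_of_mem_Ico_div_natCast hN0 (hu k) (h ▸ hu k')))
  have hsum : (n * N : ℝ) ≤ ∑ v, |xfun n m N idx j (t v)| :=
    calc (n * N : ℝ) = ∑ _k : Fin n, (N : ℝ) := by simp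
      _ ≤ ∑ k, |xfun n m N idx j (t (u k))| := sum_le_sum fun k _ =>
          (le_xfun_of_mem_Ik hnj k (hi k)).trans (le_abs_self _)
      _ ≤ _ := sum_comp_le_sum_of_injective hu_inj (g := fun v => |xfun n m N idx j (t v)|)
          fun _ => abs_nonneg _
  refine ⟨_, hmem j ⟨by omega, hjN⟩, xfun_ne_zero hN0, ?_⟩
  have hnm : (n : ℝ) / m = ε := by rw [hm]; field_simp
  calc (n * N : ℝ) / ((1 + ε) * M) * ∫ s in Ico (0 : ℝ) 1, |xfun n m N idx j s|
      = 1 / M * (n * N) := by rw [setIntegral_abs_xfun hm0 hnj hjN, hnm]; field_simp; ring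
    _ ≤ 1 / M * ∑ v, |xfun n m N idx j (t v)| := by gcongr

theorem stmt3 (n m N : ℕ) (ε : ℝ) (hn : 0 < n) (hε : 0 < ε) (hε1 : ε < 1)
    (hm : (m : ℝ) = n / ε) (hN : N = n + m ^ n)
    (idx : ℕ → Fin n → Fin m) (hidx : Set.BijOn idx (Set.Ioc n N) Set.univ)
    (M : ℕ) (t : Fin M → ℝ) (ht : ∀ j, t j ∈ Set.Icc (0 : ℝ) 1)
    (hsep : ∀ x ∈ Submodule.span ℝ (xfun n m N idx '' Set.Icc 1 N),
      x ≠ 0 → ∃ j, x (t j) ≠ 0) :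
    ∃ x ∈ Submodule.span ℝ (xfun n m N idx '' Set.Icc 1 N), x ≠ 0 ∧
      (n * N : ℝ) / ((1 + ε) * M) * ∫ s in Set.Ico (0 : ℝ) 1, |x s| ≤
        (1 / M : ℝ) * ∑ j, |x (t j)| :=
  stmt3_general n m N ε hn hε hm hN idx hidx M t hsep
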